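/- Let x, q be complex numbers with |q| < 1. Then Σ_{i,j≥0} (−1)^(T(i−j)) · x^(i+j) · q^(3i²+2ij+3j²) / ((q⁴;q⁴)_i · (q⁴;q⁴)_j) = Σ_{n≥0} x^(2n) · q^(8n²) / (q⁸;q⁸)_n, where for an integer t, T(t) = t(t−1)/2. -/

import Mathlib

/-- Finite q-Pochhammer symbol `(a; q)_n = ∏_{k=0}^{n-1} (1 - a q^k)`. -/
noncomputable def qPoch (a q : ℂ) (n : ℕ) : ℂ := ∏ k ∈ Finset.range n, (1 - a * q ^ k)

/-- The sign `(-1)^(T(i-j))` where `T(t) = t(t-1)/2` is computed in the integers. -/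
noncomputable def signT (i j : ℕ) : ℂ :=
  (-1 : ℂ) ^ ((((i : ℤ) - j) * ((i : ℤ) - j - 1)) / 2)

/-!
Group the double series by `N = i + j`. Swapping `i` and `j` multiplies the sign by `(-1)^(i+j)`
and fixes everything else, so the antidiagonals with `N` odd sum to zero. On `N = 2n` the sign is
`(-1)^(n+i)` and `3i² + 2ij + 3j² = 8n² + 4(n-i)²`, so with `Q = q⁴` the antidiagonal sum is
`x^(2n) q^(8n²) / (Q;Q)_(2n)` times `∑ᵢ (-1)^(n+i) Q^((n-i)²) [2n choose i]_Q`. Induction on `n`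
through the `Q`-Pascal rule shows that this alternating sum is `(Q;Q²)_n`, and
`(Q;Q)_(2n) = (Q;Q²)_n (Q²;Q²)_n` leaves `1 / (Q²;Q²)_n`. The double series converges absolutely
because `|(q⁴;q⁴)_i| ≥ (1 - |q|⁴)^i`, a geometric loss that the factor `|q|^(i²)` overwhelms.
-/

open Finset

lemma qPoch_succ (a q : ℂ) (n : ℕ) :
    qPoch a q (n + 1) = qPoch a q n * (1 - a * q ^ n) :=
  prod_range_succ _ _

@[simp] lemma qPoch_zero (a q : ℂ) : qPoch a q 0 = 1 := prod_range_zero _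

lemma one_sub_norm_pow_le_norm_qPoch {a r : ℂ} (ha : ‖a‖ ≤ 1) (hr : ‖r‖ ≤ 1) (n : ℕ) :
    (1 - ‖a‖) ^ n ≤ ‖qPoch a r n‖ := by
  rw [qPoch, norm_prod]
  calc (1 - ‖a‖) ^ n = ∏ _k ∈ range n, (1 - ‖a‖) := by rw [prod_const, card_range]
    _ ≤ _ := prod_le_prod (fun _ _ => sub_nonneg.2 ha) fun k _ => ?_
  calc 1 - ‖a‖ ≤ ‖(1 : ℂ)‖ - ‖a * r ^ k‖ := by
        rw [norm_one, norm_mul, norm_pow]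
        gcongr
        exact mul_le_of_le_one_right (norm_nonneg a) (pow_le_one₀ (norm_nonneg r) hr)
    _ ≤ ‖1 - a * r ^ k‖ := norm_sub_norm_le _ _

lemma qPoch_ne_zero {a r : ℂ} (ha : ‖a‖ < 1) (hr : ‖r‖ ≤ 1) (n : ℕ) : qPoch a r n ≠ 0 :=
  norm_pos_iff.1 <| (pow_pos (sub_pos.2 ha) n).trans_le
    (one_sub_norm_pow_le_norm_qPoch ha.le hr n)

lemma qPoch_self_ne_zero {Q : ℂ} (hQ : ‖Q‖ < 1) (n : ℕ) : qPoch Q Q n ≠ 0 :=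
  qPoch_ne_zero hQ hQ.le n

lemma qPoch_two_mul (Q : ℂ) (n : ℕ) :
    qPoch Q Q (2 * n) = qPoch Q (Q ^ 2) n * qPoch (Q ^ 2) (Q ^ 2) n := by
  induction n with
  | zero => simp
  | succ n ih =>
    rw [mul_add_one, qPoch_succ, qPoch_succ, qPoch_succ, qPoch_succ, ih]
    ring

def qBinom (Q : ℂ) : ℕ → ℕ → ℂ
  | _, 0 => 1
  | 0, _ + 1 => 0
  | m + 1, j + 1 => qBinom Q m j + Q ^ (j + 1) * qBinom Q m (j + 1)

namespace qBinom

variable (Q : ℂ)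

@[simp] lemma zero_right (m : ℕ) : qBinom Q m 0 = 1 := by cases m <;> rfl

lemma succ_succ (m j : ℕ) :
    qBinom Q (m + 1) (j + 1) = qBinom Q m j + Q ^ (j + 1) * qBinom Q m (j + 1) := rfl

lemma eq_zero_of_lt {m j : ℕ} (h : m < j) : qBinom Q m j = 0 := by
  induction m generalizing j with
  | zero => obtain ⟨j, rfl⟩ := Nat.exists_eq_add_one.2 h; rfl
  | succ m ih =>
    obtain ⟨j, rfl⟩ := Nat.exists_eq_add_one.2 (m.succ_pos.trans h)
    rw [succ_succ, ih (by omega), ih (by omega), mul_zero, add_zero]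

@[simp] lemma self (m : ℕ) : qBinom Q m m = 1 := by
  induction m with
  | zero => rfl
  | succ m ih => rw [succ_succ, ih, eq_zero_of_lt Q m.lt_succ_self, mul_zero, add_zero]

lemma mul_qPoch_mul_qPoch {m j : ℕ} (h : j ≤ m) :
    qBinom Q m j * (qPoch Q Q j * qPoch Q Q (m - j)) = qPoch Q Q m := by
  induction m generalizing j with
  | zero => obtain rfl := Nat.le_zero.1 h; simp
  | succ m ih =>
    obtain _ | j := j
    · simp
    obtain rfl | hj := (Nat.le_of_succ_le_succ h).eq_or_lt
    · simp
    have hsub : m - j = m - (j + 1) + 1 := by omega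
    have hexp : Q ^ (j + 1) * (Q * Q ^ (m - (j + 1))) = Q * Q ^ m := by
      rw [← pow_succ', ← pow_succ', ← pow_add]; congr 1; omega
    have ih_j := ih hj.le
    have ih_succ := ih hj
    rw [hsub, qPoch_succ] at ih_j
    rw [qPoch_succ] at ih_succ
    rw [succ_succ, Nat.add_sub_add_right, hsub, qPoch_succ, qPoch_succ, qPoch_succ]
    linear_combination (1 - Q * Q ^ j) * ih_j +
      Q ^ (j + 1) * (1 - Q * Q ^ (m - (j + 1))) * ih_succ - qPoch Q Q m * hexp

variable {Q}

lemma one_sub_pow_mul_succ (hQ : ‖Q‖ < 1) {m j : ℕ} (hj : j ≤ m + 1) :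
    (1 - Q ^ (m + 1 - j)) * qBinom Q (m + 1) j = (1 - Q ^ (m + 1)) * qBinom Q m j := by
  obtain rfl | hlt := hj.eq_or_lt
  · simp [eq_zero_of_lt Q (Nat.lt_succ_self m)]
  have hj : j ≤ m := Nat.le_of_lt_succ hlt
  refine mul_right_cancel₀ (mul_ne_zero (qPoch_self_ne_zero hQ j)
    (qPoch_self_ne_zero hQ (m - j))) ?_
  have hsucc := mul_qPoch_mul_qPoch Q hlt.le
  rw [Nat.sub_add_comm hj, qPoch_succ] at hsucc
  rw [Nat.sub_add_comm hj, pow_succ', pow_succ']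
  linear_combination hsucc - (1 - Q * Q ^ m) * mul_qPoch_mul_qPoch Q hj + qPoch_succ Q Q m

end qBinom

lemma Nat.cast_dist_sq (n j : ℕ) : (Nat.dist n j : ℤ) ^ 2 = ((n : ℤ) - j) ^ 2 := by
  rcases le_total j n with h | h
  · rw [Nat.dist_eq_sub_of_le_right h]; push_cast [h]; ring
  · rw [Nat.dist_eq_sub_of_le h]; push_cast [h]; ring

lemma Nat.dist_succ_left_sq_add {n j : ℕ} (hj : j ≤ 2 * n + 1) :
    Nat.dist (n + 1) j ^ 2 + j = Nat.dist n j ^ 2 + (2 * n + 1 - j) := by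
  zify [hj]
  rw [Nat.cast_dist_sq, Nat.cast_dist_sq]
  push_cast
  ring

def alternatingWeight (Q : ℂ) (n j : ℕ) : ℂ := (-1) ^ (n + j) * Q ^ (Nat.dist n j ^ 2)

lemma alternatingWeight_succ_succ (Q : ℂ) (n j : ℕ) :
    alternatingWeight Q (n + 1) (j + 1) = alternatingWeight Q n j := by
  rw [alternatingWeight, alternatingWeight, Nat.dist_succ_succ]
  ring

lemma alternatingWeight_succ_left_mul_pow (Q : ℂ) {n j : ℕ} (hj : j ≤ 2 * n + 1) :
    alternatingWeight Q (n + 1) j * Q ^ j = -(alternatingWeight Q n j * Q ^ (2 * n + 1 - j)) := by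
  rw [alternatingWeight, alternatingWeight, mul_assoc, ← pow_add, Nat.dist_succ_left_sq_add hj,
    pow_add]
  ring

lemma qBinom.sum_alternatingWeight_mul {Q : ℂ} (hQ : ‖Q‖ < 1) (n : ℕ) :
    ∑ j ∈ range (2 * n + 1), alternatingWeight Q n j * qBinom Q (2 * n) j = qPoch Q (Q ^ 2) n := by
  induction n with
  | zero => simp [alternatingWeight]
  | succ n ih =>
    -- the `Q ^ (j + 1) * qBinom Q m (j + 1)` halves of the Pascal rule, shifted down by one
    set G : ℕ → ℂ := fun j => alternatingWeight Q (n + 1) j * Q ^ j * qBinom Q (2 * n + 1) j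
    have hGtop : G (2 * n + 2) = 0 := by
      simp [G, qBinom.eq_zero_of_lt Q (Nat.lt_succ_self (2 * n + 1))]
    have hcombine : ∀ j ∈ range (2 * n + 2),
        alternatingWeight Q n j * qBinom Q (2 * n + 1) j + G j =
          (1 - Q ^ (2 * n + 1)) * (alternatingWeight Q n j * qBinom Q (2 * n) j) := by
      intro j hj
      have hj : j ≤ 2 * n + 1 := Nat.lt_succ_iff.1 (mem_range.1 hj)
      simp only [G]
      rw [alternatingWeight_succ_left_mul_pow Q hj]
      linear_combination alternatingWeight Q n j * qBinom.one_sub_pow_mul_succ hQ hj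
    calc ∑ j ∈ range (2 * (n + 1) + 1), alternatingWeight Q (n + 1) j * qBinom Q (2 * (n + 1)) j
        = ∑ j ∈ range (2 * n + 2), (alternatingWeight Q n j * qBinom Q (2 * n + 1) j + G (j + 1)) +
            G 0 := by
          rw [mul_add_one, sum_range_succ']
          congr 1
          · refine sum_congr rfl fun j _ => ?_
            simp only [G, qBinom.succ_succ, alternatingWeight_succ_succ]
            ring
          · simp [G]
      _ = ∑ j ∈ range (2 * n + 2), (alternatingWeight Q n j * qBinom Q (2 * n + 1) j + G j) := by
          rw [sum_add_distrib, add_assoc, ← sum_range_succ' G, sum_range_succ G, hGtop, add_zero,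
            sum_add_distrib]
      _ = (1 - Q ^ (2 * n + 1)) *
            ∑ j ∈ range (2 * n + 1), alternatingWeight Q n j * qBinom Q (2 * n) j := by
          rw [sum_congr rfl hcombine, ← mul_sum, sum_range_succ,
            qBinom.eq_zero_of_lt Q (Nat.lt_succ_self (2 * n)), mul_zero, add_zero]
      _ = qPoch Q (Q ^ 2) (n + 1) := by
          rw [ih, qPoch_succ, ← pow_mul, ← pow_succ']
          ring

lemma sum_div_qPoch_mul_qPoch {Q : ℂ} (hQ : ‖Q‖ < 1) (n : ℕ) :
    ∑ j ∈ range (2 * n + 1),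
        alternatingWeight Q n j / (qPoch Q Q j * qPoch Q Q (2 * n - j)) =
      (qPoch (Q ^ 2) (Q ^ 2) n)⁻¹ := by
  have hQ2 : ‖Q ^ 2‖ < 1 := by rw [norm_pow]; exact pow_lt_one₀ (norm_nonneg Q) hQ two_ne_zero
  have hodd := qPoch_ne_zero hQ hQ2.le n
  have heven := qPoch_self_ne_zero hQ2 n
  have hterm : ∀ j ∈ range (2 * n + 1),
      alternatingWeight Q n j / (qPoch Q Q j * qPoch Q Q (2 * n - j)) =
        alternatingWeight Q n j * qBinom Q (2 * n) j / qPoch Q Q (2 * n) := by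
    intro j hj
    have hj := Nat.lt_succ_iff.1 (mem_range.1 hj)
    rw [div_eq_div_iff (mul_ne_zero (qPoch_self_ne_zero hQ j)
      (qPoch_self_ne_zero hQ (2 * n - j))) (qPoch_self_ne_zero hQ (2 * n)),
      ← qBinom.mul_qPoch_mul_qPoch Q hj]
    ring
  rw [sum_congr rfl hterm, ← sum_div, qBinom.sum_alternatingWeight_mul hQ, qPoch_two_mul]
  field_simp

lemma neg_one_zpow_eq_of_even_sub {R : Type*} [DivisionRing R] {a b : ℤ} (h : Even (a - b)) :
    (-1 : R) ^ a = (-1) ^ b := by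
  rw [← sub_add_cancel a b, zpow_add₀ (neg_ne_zero.2 one_ne_zero), h.neg_one_zpow, one_mul]

lemma signT_eq_of_mul_eq {i j : ℕ} {k : ℤ} (hk : ((i : ℤ) - j) * ((i : ℤ) - j - 1) = 2 * k) :
    signT i j = (-1) ^ k := by
  rw [signT, hk, Int.mul_ediv_cancel_left _ two_ne_zero]

lemma signT_swap (i j : ℕ) : signT j i = (-1) ^ (i + j) * signT i j := by
  obtain ⟨k, hk⟩ := Int.even_mul_pred_self ((i : ℤ) - j)
  rw [signT_eq_of_mul_eq (i := i) (j := j) (k := k) (by linear_combination hk),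
    signT_eq_of_mul_eq (i := j) (j := i) (k := k + (i - j)) (by linear_combination hk),
    zpow_add₀ (neg_ne_zero.2 one_ne_zero), mul_comm ((-1 : ℂ) ^ k), ← zpow_natCast]
  push_cast
  rw [neg_one_zpow_eq_of_even_sub (a := (i : ℤ) - j) (b := i + j) ⟨-j, by ring⟩]

lemma signT_sub {n k : ℕ} (hk : k ≤ 2 * n) : signT k (2 * n - k) = (-1) ^ (n + k) := by
  rw [signT_eq_of_mul_eq (k := ((k : ℤ) - n) * (2 * k - 2 * n - 1)) (by push_cast [hk]; ring),
    ← zpow_natCast, neg_one_zpow_eq_of_even_sub]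
  push_cast
  exact ⟨((k : ℤ) - n) ^ 2 - k, by ring⟩

lemma Finset.Nat.sum_antidiagonal_eq_zero_of_swap {R : Type*} [Ring R] [NoZeroDivisors R]
    [CharZero R] {f : ℕ × ℕ → R} {N : ℕ} (h : ∀ p ∈ antidiagonal N, f p.swap = -f p) :
    ∑ p ∈ antidiagonal N, f p = 0 :=
  self_eq_neg.1 <| (Finset.Nat.sum_antidiagonal_swap ..).symm.trans <| by
    rw [sum_congr rfl h, sum_neg_distrib]

noncomputable def doubleSeriesTerm (x q : ℂ) (p : ℕ × ℕ) : ℂ :=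
  signT p.1 p.2 * x ^ (p.1 + p.2) * q ^ (3 * p.1 ^ 2 + 2 * p.1 * p.2 + 3 * p.2 ^ 2) /
    (qPoch (q ^ 4) (q ^ 4) p.1 * qPoch (q ^ 4) (q ^ 4) p.2)

lemma doubleSeriesTerm_swap (x q : ℂ) (i j : ℕ) :
    doubleSeriesTerm x q (j, i) = (-1) ^ (i + j) * doubleSeriesTerm x q (i, j) := by
  simp only [doubleSeriesTerm, signT_swap i j]
  ring_nf

lemma sum_antidiagonal_doubleSeriesTerm_of_odd (x q : ℂ) {N : ℕ} (hN : Odd N) :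
    ∑ p ∈ antidiagonal N, doubleSeriesTerm x q p = 0 :=
  Finset.Nat.sum_antidiagonal_eq_zero_of_swap fun p hp => by
    rw [Prod.swap, doubleSeriesTerm_swap, mem_antidiagonal.1 hp, hN.neg_one_pow, neg_one_mul]

lemma sum_antidiagonal_doubleSeriesTerm_two_mul (x : ℂ) {q : ℂ} (hq : ‖q‖ < 1) (n : ℕ) :
    ∑ p ∈ antidiagonal (2 * n), doubleSeriesTerm x q p =
      x ^ (2 * n) * q ^ (8 * n ^ 2) / qPoch (q ^ 8) (q ^ 8) n := by
  have hQ : ‖q ^ 4‖ < 1 := by rw [norm_pow]; exact pow_lt_one₀ (norm_nonneg q) hq four_ne_zero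
  have hterm : ∀ k ∈ range (2 * n + 1), doubleSeriesTerm x q (k, 2 * n - k) =
      x ^ (2 * n) * q ^ (8 * n ^ 2) * (alternatingWeight (q ^ 4) n k /
        (qPoch (q ^ 4) (q ^ 4) k * qPoch (q ^ 4) (q ^ 4) (2 * n - k))) := by
    intro k hk
    have hk := Nat.lt_succ_iff.1 (mem_range.1 hk)
    have hexp : 3 * k ^ 2 + 2 * k * (2 * n - k) + 3 * (2 * n - k) ^ 2 =
        8 * n ^ 2 + 4 * Nat.dist n k ^ 2 := by
      zify [hk]
      rw [Nat.cast_dist_sq]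
      ring
    rw [doubleSeriesTerm, alternatingWeight, signT_sub hk, Nat.add_sub_cancel' hk, hexp, pow_add,
      pow_mul]
    ring
  rw [Finset.Nat.sum_antidiagonal_eq_sum_range_succ_mk, sum_congr rfl hterm, ← mul_sum,
    sum_div_qPoch_mul_qPoch hQ, ← pow_mul, div_eq_mul_inv]

lemma summable_pow_mul_pow_sq (X : ℝ) {Y : ℝ} (hY0 : 0 ≤ Y) (hY : Y < 1) :
    Summable fun i : ℕ => X ^ i * Y ^ (i ^ 2) := by
  have hlim : Filter.Tendsto (fun i : ℕ => ‖X‖ * Y ^ i) Filter.atTop (nhds 0) := by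
    simpa using (tendsto_pow_atTop_nhds_zero_of_lt_one hY0 hY).const_mul ‖X‖
  refine .of_norm_bounded_eventually_nat summable_geometric_two ?_
  filter_upwards [hlim.eventually (gt_mem_nhds one_half_pos)] with i hi
  calc ‖X ^ i * Y ^ (i ^ 2)‖ = (‖X‖ * Y ^ i) ^ i := by
        rw [norm_mul, norm_pow, norm_pow, Real.norm_of_nonneg hY0, mul_pow, ← pow_mul, sq]
    _ ≤ (1 / 2) ^ i := pow_le_pow_left₀ (by positivity) hi.le i

lemma norm_signT (i j : ℕ) : ‖signT i j‖ = 1 := by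
  rw [signT, norm_zpow, norm_neg, norm_one, one_zpow]

lemma norm_doubleSeriesTerm_le (x : ℂ) {q : ℂ} (hq : ‖q‖ < 1) (i j : ℕ) :
    ‖doubleSeriesTerm x q (i, j)‖ ≤
      (‖x‖ / (1 - ‖q‖ ^ 4)) ^ i * ‖q‖ ^ (i ^ 2) * ((‖x‖ / (1 - ‖q‖ ^ 4)) ^ j * ‖q‖ ^ (j ^ 2)) := by
  have hr : ‖q ^ 4‖ < 1 := by rw [norm_pow]; exact pow_lt_one₀ (norm_nonneg q) hq four_ne_zero
  have hpos : 0 < 1 - ‖q‖ ^ 4 := by rw [← norm_pow]; exact sub_pos.2 hr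
  have hexp : ‖q‖ ^ (3 * i ^ 2 + 2 * i * j + 3 * j ^ 2) ≤ ‖q‖ ^ (i ^ 2) * ‖q‖ ^ (j ^ 2) := by
    rw [← pow_add]
    exact pow_le_pow_of_le_one (norm_nonneg q) hq.le (by nlinarith)
  calc ‖doubleSeriesTerm x q (i, j)‖
      = ‖x‖ ^ i * ‖x‖ ^ j * ‖q‖ ^ (3 * i ^ 2 + 2 * i * j + 3 * j ^ 2) /
          (‖qPoch (q ^ 4) (q ^ 4) i‖ * ‖qPoch (q ^ 4) (q ^ 4) j‖) := by
        rw [doubleSeriesTerm, norm_div, norm_mul, norm_mul, norm_mul, norm_signT, one_mul,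
          norm_pow, norm_pow, pow_add]
    _ ≤ ‖x‖ ^ i * ‖x‖ ^ j * (‖q‖ ^ (i ^ 2) * ‖q‖ ^ (j ^ 2)) /
          ((1 - ‖q‖ ^ 4) ^ i * (1 - ‖q‖ ^ 4) ^ j) := by
        have hi := one_sub_norm_pow_le_norm_qPoch hr.le hr.le i
        have hj := one_sub_norm_pow_le_norm_qPoch hr.le hr.le j
        rw [norm_pow] at hi hj
        gcongr
    _ = _ := by rw [div_pow, div_pow]; field_simp

lemma summable_doubleSeriesTerm (x : ℂ) {q : ℂ} (hq : ‖q‖ < 1) :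
    Summable (doubleSeriesTerm x q) := by
  have hpos : 0 < 1 - ‖q‖ ^ 4 := sub_pos.2 (pow_lt_one₀ (norm_nonneg q) hq four_ne_zero)
  have h := summable_pow_mul_pow_sq (‖x‖ / (1 - ‖q‖ ^ 4)) (norm_nonneg q) hq
  exact .of_norm_bounded (h.mul_of_nonneg h (fun _ => by positivity) fun _ => by positivity)
    fun p => norm_doubleSeriesTerm_le x hq p.1 p.2

lemma tsum_prod_eq_tsum_sum_antidiagonal {A E : Type*} [AddCommMonoid A] [HasAntidiagonal A]
    [NormedAddCommGroup E] [CompleteSpace E] {f : A × A → E} (hf : Summable f) :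
    ∑' p, f p = ∑' n, ∑ p ∈ antidiagonal n, f p := by
  conv_rhs => enter [1, n]; rw [← sum_finset_coe, ← tsum_fintype (L := .unconditional _)]
  rw [← HasAntidiagonal.sigmaAntidiagonalEquivProd.tsum_eq f]
  exact Summable.tsum_sigma' (fun n => (hasSum_fintype _).summable)
    (HasAntidiagonal.sigmaAntidiagonalEquivProd.summable_iff.2 hf)

lemma tsum_eq_tsum_two_mul_of_odd {E : Type*} [AddCommMonoid E] [TopologicalSpace E]
    {f : ℕ → E} (hf : ∀ n, Odd n → f n = 0) : ∑' n, f n = ∑' n, f (2 * n) := by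
  refine (Function.Injective.tsum_eq (mul_right_injective₀ two_ne_zero) fun n hn => ?_).symm
  obtain ⟨k, rfl⟩ := Nat.not_odd_iff_even.1 (mt (hf n) hn)
  exact ⟨k, two_mul k⟩

theorem stmt_9 (x q : ℂ) (hq : ‖q‖ < 1) :
    (∑' p : ℕ × ℕ,
        signT p.1 p.2 * x ^ (p.1 + p.2) *
          q ^ (3 * p.1 ^ 2 + 2 * p.1 * p.2 + 3 * p.2 ^ 2) /
          (qPoch (q ^ 4) (q ^ 4) p.1 * qPoch (q ^ 4) (q ^ 4) p.2))
      = ∑' n : ℕ, x ^ (2 * n) * q ^ (8 * n ^ 2) / qPoch (q ^ 8) (q ^ 8) n := by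
  calc _ = ∑' p, doubleSeriesTerm x q p := rfl
    _ = ∑' N, ∑ p ∈ antidiagonal N, doubleSeriesTerm x q p :=
        tsum_prod_eq_tsum_sum_antidiagonal (summable_doubleSeriesTerm x hq)
    _ = ∑' n, ∑ p ∈ antidiagonal (2 * n), doubleSeriesTerm x q p :=
        tsum_eq_tsum_two_mul_of_odd fun _ => sum_antidiagonal_doubleSeriesTerm_of_odd x q
    _ = _ := tsum_congr (sum_antidiagonal_doubleSeriesTerm_two_mul x hq)
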